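/- arXiv:1107.3790 — 2 statements merged into one kernel-verified Lean document; each statement's English description precedes it below -/
import Mathlib

section
/- Let μ be a Radon diffuse measure on (0,1] and M(t) = exp(μ((t,1])). If a continuous function x : (0,1] → ℝ satisfies x(t) = ∫₀^t x(r) dμ(r) for all t ∈ (0,1] (with the integral existing as a limit of ∫_ε^t as ε → 0), then the function t ↦ x(t) M(t) is constant on (0,1]. -/
/-!
Write `G r = μ((r, 1])` and, for `p ≤ q`, `Δ = μ((p, q]) = G p - G q`. By the equation and
continuity of `x`, `x q = x p (1 + Δ) + o(Δ)`, while `exp (G p) = exp (G q) exp Δ` and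
`exp Δ = 1 + Δ + O(Δ²)`. Hence the increment of `x · exp G` over `[p, q]` is `o(Δ)`, uniformly
on `[s, t]` because `G` is continuous there (`μ` has no atoms). Over a fine partition of `[s, t]`
the `Δ`s telescope to `G s - G t`, so `x · exp G` changes by at most `ε (G s - G t)` for every
`ε > 0`.
-/

open MeasureTheory Filter Real Set Topology

theorem abs_sub_le_mul_sub_of_forall_sub_lt {f F : ℝ → ℝ} {a b ε δ : ℝ} (hab : a ≤ b) (hδ : 0 < δ)
    (h : ∀ p ∈ Icc a b, ∀ q ∈ Icc a b, p ≤ q → q - p < δ → |f q - f p| ≤ ε * (F q - F p)) :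
    |f b - f a| ≤ ε * (F b - F a) := by
  obtain ⟨n, hn⟩ := exists_nat_gt ((b - a) / δ)
  have hn0 : (0 : ℝ) < n := (div_nonneg (sub_nonneg.2 hab) hδ.le).trans_lt hn
  set d := (b - a) / n with hd
  have hd0 : 0 ≤ d := div_nonneg (sub_nonneg.2 hab) hn0.le
  have hdδ : d < δ := by rwa [hd, div_lt_iff₀ hn0, mul_comm, ← div_lt_iff₀ hδ]
  set φ : ℕ → ℝ := fun i ↦ a + i * d with hφ
  have hφ0 : φ 0 = a := by simp [hφ]
  have hφn : φ n = b := by simp only [hφ, hd]; field_simp; ring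
  have hstep : ∀ i, φ (i + 1) = φ i + d := fun i ↦ by simp only [hφ]; push_cast; ring
  have hmem : ∀ i ≤ n, φ i ∈ Icc a b := fun i hi ↦ by
    have : (i : ℝ) * d ≤ n * d := mul_le_mul_of_nonneg_right (by exact_mod_cast hi) hd0
    refine ⟨le_add_of_nonneg_right (mul_nonneg (Nat.cast_nonneg i) hd0), ?_⟩
    rw [← hφn]
    simp only [hφ]
    linarith
  calc |f b - f a| = |∑ i ∈ Finset.range n, (f (φ (i + 1)) - f (φ i))| := by
        rw [Finset.sum_range_sub (fun i ↦ f (φ i)), hφ0, hφn]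
    _ ≤ ∑ i ∈ Finset.range n, |f (φ (i + 1)) - f (φ i)| := Finset.abs_sum_le_sum_abs _ _
    _ ≤ ∑ i ∈ Finset.range n, ε * (F (φ (i + 1)) - F (φ i)) := by
        refine Finset.sum_le_sum fun i hi ↦ ?_
        have hi := Finset.mem_range.1 hi
        exact h _ (hmem i hi.le) _ (hmem (i + 1) hi) (by linarith [hstep i])
          (by linarith [hstep i])
    _ = ε * (F b - F a) := by
        rw [← Finset.mul_sum, Finset.sum_range_sub (fun i ↦ F (φ i)), hφ0, hφn]

theorem eq_of_forall_abs_sub_le_mul_sub {f F : ℝ → ℝ} {a b : ℝ} (hab : a ≤ b)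
    (h : ∀ ε > 0, ∃ δ > 0, ∀ p ∈ Icc a b, ∀ q ∈ Icc a b, p ≤ q → q - p < δ →
      |f q - f p| ≤ ε * (F q - F p)) :
    f a = f b := by
  refine eq_of_forall_dist_le fun ε hε ↦ ?_
  set K := |F b - F a|
  obtain ⟨δ, hδ, hfδ⟩ := h (ε / (K + 1)) (by positivity)
  calc dist (f a) (f b) = |f b - f a| := by rw [Real.dist_eq, abs_sub_comm]
    _ ≤ ε / (K + 1) * (F b - F a) := abs_sub_le_mul_sub_of_forall_sub_lt hab hδ hfδ
    _ ≤ ε / (K + 1) * K := by gcongr; exact le_abs_self _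
    _ ≤ ε := by rw [div_mul_eq_mul_div, div_le_iff₀ (by positivity)]; nlinarith

theorem abs_mul_exp_sub_mul_exp_add_le {a b I Δ ε g : ℝ} (hb : b = a + I)
    (hI : |I - a * Δ| ≤ ε * Δ) (hΔ₀ : 0 ≤ Δ) (hΔ₁ : Δ ≤ 1) :
    |b * exp g - a * exp (g + Δ)| ≤ exp g * (ε + |a| * Δ) * Δ := by
  have hexp : |exp Δ - 1 - Δ| ≤ Δ ^ 2 := abs_exp_sub_one_sub_id_le (by rwa [abs_of_nonneg hΔ₀])
  calc |b * exp g - a * exp (g + Δ)| = exp g * |(I - a * Δ) - a * (exp Δ - 1 - Δ)| := by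
        rw [hb, exp_add, ← abs_exp g, ← abs_mul, abs_exp]; ring_nf
    _ ≤ exp g * (ε * Δ + |a| * Δ ^ 2) := by
        gcongr
        refine (abs_sub _ _).trans (add_le_add hI ?_)
        rw [abs_mul]; gcongr
    _ = exp g * (ε + |a| * Δ) * Δ := by ring

theorem continuousOn_measureReal_Ioc_left {μ : Measure ℝ} [NullSingletonClass μ] {a b : ℝ}
    (h : μ (Ioc a b) ≠ ⊤) : ContinuousOn (fun r ↦ μ.real (Ioc r b)) (Ici a) := by
  have hint : IntegrableOn (fun _ ↦ (1 : ℝ)) (Ioi a) (μ.restrict (Iic b)) := by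
    refine integrableOn_const ?_
    rwa [Measure.restrict_apply' measurableSet_Iic, Ioi_inter_Iic]
  convert hint.continuousOn_Ici_primitive_Ioi using 2 with r
  rw [setIntegral_const, smul_eq_mul, mul_one, measureReal_restrict_apply' measurableSet_Iic,
    Ioi_inter_Iic]

theorem measureReal_Ioc_add_measureReal_Ioc {μ : Measure ℝ} {a b c : ℝ} (hab : a ≤ b) (hbc : b ≤ c)
    (h : μ (Ioc a c) ≠ ⊤) : μ.real (Ioc a b) + μ.real (Ioc b c) = μ.real (Ioc a c) := by
  rw [← Ioc_union_Ioc_eq_Ioc hab hbc] at h ⊢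
  rw [measureReal_union (Ioc_disjoint_Ioc_of_le le_rfl) measurableSet_Ioc
    (measure_ne_top_of_subset subset_union_left h) (measure_ne_top_of_subset subset_union_right h)]

theorem ContinuousOn.integrableOn_Ioc {E : Type*} [NormedAddCommGroup E] {μ : Measure ℝ}
    {f : ℝ → E} {a b : ℝ}
    (hf : ContinuousOn f (Icc a b)) (hμ : μ (Ioc a b) ≠ ⊤) : IntegrableOn f (Ioc a b) μ := by
  obtain ⟨C, hC⟩ := isCompact_Icc.exists_bound_of_continuousOn hf
  exact IntegrableOn.of_bound hμ.lt_top
    ((hf.mono Ioc_subset_Icc_self).aestronglyMeasurable measurableSet_Ioc) C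
    ((ae_restrict_iff' measurableSet_Ioc).2 (ae_of_all _ fun r hr ↦ hC r (Ioc_subset_Icc_self hr)))

theorem abs_setIntegral_sub_mul_measureReal_le {μ : Measure ℝ} {f : ℝ → ℝ} {s : Set ℝ} {c ε : ℝ}
    (hf : IntegrableOn f s μ) (hμ : μ s ≠ ⊤) (hε : ∀ r ∈ s, |f r - c| ≤ ε) :
    |∫ r in s, f r ∂μ - c * μ.real s| ≤ ε * μ.real s := by
  have : ∫ r in s, f r ∂μ - c * μ.real s = ∫ r in s, (f r - c) ∂μ := by
    rw [integral_sub hf (integrableOn_const hμ), setIntegral_const, smul_eq_mul, mul_comm]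
  rw [this]
  exact norm_setIntegral_le_of_norm_le_const hμ.lt_top fun r hr ↦
    (Real.norm_eq_abs _).trans_le (hε r hr)

theorem eq_add_setIntegral_Ioc_of_tendsto {μ : Measure ℝ} {f : ℝ → ℝ} {a p q u v : ℝ}
    (hap : a < p) (hpq : p ≤ q) (hf : ∀ ε ∈ Ioo a p, IntegrableOn f (Ioc ε q) μ)
    (hu : Tendsto (fun ε ↦ ∫ r in Ioc ε p, f r ∂μ) (𝓝[>] a) (𝓝 u))
    (hv : Tendsto (fun ε ↦ ∫ r in Ioc ε q, f r ∂μ) (𝓝[>] a) (𝓝 v)) :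
    v = u + ∫ r in Ioc p q, f r ∂μ := by
  refine tendsto_nhds_unique (hv.congr' ?_) (hu.add_const _)
  filter_upwards [Ioo_mem_nhdsGT hap] with ε hε
  have hf' := hf ε hε
  rw [← setIntegral_union (Ioc_disjoint_Ioc_of_le le_rfl) measurableSet_Ioc
    (hf'.mono_set (Ioc_subset_Ioc_right hpq)) (hf'.mono_set (Ioc_subset_Ioc_left hε.2.le)),
    Ioc_union_Ioc_eq_Ioc hε.2.le hpq]

theorem exists_forall_abs_mul_exp_measureReal_sub_le {μ : Measure ℝ} [NullSingletonClass μ]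
    {x : ℝ → ℝ} {s t b : ℝ} (ht : t ≤ b) (hfin : μ (Ioc s b) ≠ ⊤) (hx : ContinuousOn x (Icc s t))
    (hstep : ∀ p ∈ Icc s t, ∀ q ∈ Icc s t, p ≤ q → x q = x p + ∫ r in Ioc p q, x r ∂μ) :
    ∀ ε > 0, ∃ δ > 0, ∀ p ∈ Icc s t, ∀ q ∈ Icc s t, p ≤ q → q - p < δ →
      |x q * exp (μ.real (Ioc q b)) - x p * exp (μ.real (Ioc p b))| ≤
        ε * (μ.real (Ioc p b) - μ.real (Ioc q b)) := by
  intro ε hε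
  set G := fun r ↦ μ.real (Ioc r b)
  have hGcont : ContinuousOn G (Icc s t) :=
    (continuousOn_measureReal_Ioc_left hfin).mono Icc_subset_Ici_self
  obtain ⟨B, hB⟩ := isCompact_Icc.exists_bound_of_continuousOn hx
  set C := exp (G s) * (1 + |B|)
  have hC : 0 < C := by positivity
  set η := min 1 (ε / C)
  have hη : 0 < η := lt_min one_pos (div_pos hε hC)
  obtain ⟨δ₁, hδ₁, hxη⟩ := Metric.uniformContinuousOn_iff.1
    (isCompact_Icc.uniformContinuousOn_of_continuous hx) η hη
  obtain ⟨δ₂, hδ₂, hGη⟩ := Metric.uniformContinuousOn_iff.1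
    (isCompact_Icc.uniformContinuousOn_of_continuous hGcont) η hη
  refine ⟨min δ₁ δ₂, lt_min hδ₁ hδ₂, fun p hp q hq hpq hδ ↦ ?_⟩
  have hpb : μ (Ioc p q) ≠ ⊤ :=
    measure_ne_top_of_subset (Ioc_subset_Ioc hp.1 (hq.2.trans ht)) hfin
  have hsplit : μ.real (Ioc p q) + G q = G p :=
    measureReal_Ioc_add_measureReal_Ioc hpq (hq.2.trans ht)
      (measure_ne_top_of_subset (Ioc_subset_Ioc_left hp.1) hfin)
  set Δ := μ.real (Ioc p q)
  have hclose : ∀ r ∈ Icc p q, dist r p < min δ₁ δ₂ := fun r hr ↦ by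
    rw [Real.dist_eq, abs_of_nonneg (sub_nonneg.2 hr.1)]
    linarith [hr.2]
  have hΔη : Δ < η := by
    have := hGη p hp q hq
      (dist_comm p q ▸ (hclose q (right_mem_Icc.2 hpq)).trans_le (min_le_right _ _))
    rwa [Real.dist_eq, ← hsplit, add_sub_cancel_right, abs_of_nonneg measureReal_nonneg] at this
  have hosc : ∀ r ∈ Ioc p q, |x r - x p| ≤ η := fun r hr ↦
    (hxη r ⟨hp.1.trans hr.1.le, hr.2.trans hq.2⟩ p hp
      ((hclose r (Ioc_subset_Icc_self hr)).trans_le (min_le_left _ _))).le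
  have hI := abs_setIntegral_sub_mul_measureReal_le
    ((hx.mono (Icc_subset_Icc hp.1 hq.2)).integrableOn_Ioc hpb) hpb hosc
  have key := abs_mul_exp_sub_mul_exp_add_le (g := G q) (hstep p hp q hq hpq) hI measureReal_nonneg
    (hΔη.le.trans (min_le_left _ _))
  rw [add_comm, hsplit] at key
  have hGq : G q ≤ G s := measureReal_mono (Ioc_subset_Ioc_left (hp.1.trans hpq)) hfin
  have hxp : |x p| ≤ |B| := (hB p hp).trans (le_abs_self B)
  calc |x q * exp (G q) - x p * exp (G p)| ≤ exp (G q) * (η + |x p| * Δ) * Δ := key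
    _ ≤ exp (G s) * (η + |B| * η) * Δ := by gcongr
    _ = C * η * Δ := by ring
    _ ≤ ε * Δ := by gcongr; exact (le_div_iff₀' hC).1 (min_le_right _ _)
    _ = ε * (G p - G q) := by rw [← hsplit]; ring

/-- Deterministic uniqueness lemma: if `μ` is a diffuse Radon measure on `(0,1]`,
`M(t) = exp(μ((t,1]))`, and a continuous `x : (0,1] → ℝ` satisfies
`x(t) = lim_{ε→0} ∫_ε^t x dμ` for all `t ∈ (0,1]`, then `x·M` is constant on `(0,1]`. -/
theorem homogeneous_solution_mul_M_const
    (μ : Measure ℝ) [NullSingletonClass μ]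
    (hfin : ∀ t : ℝ, 0 < t → μ (Ioc t 1) ≠ ⊤)
    (x : ℝ → ℝ) (hx : ContinuousOn x (Ioc 0 1))
    (heq : ∀ t ∈ Ioc (0:ℝ) 1,
      Tendsto (fun ε => ∫ r in Ioc ε t, x r ∂μ) (nhdsWithin 0 (Ioi 0)) (nhds (x t))) :
    ∀ s ∈ Ioc (0:ℝ) 1, ∀ t ∈ Ioc (0:ℝ) 1,
      x s * Real.exp ((μ (Ioc s 1)).toReal) = x t * Real.exp ((μ (Ioc t 1)).toReal) := by
  intro s hs t ht
  wlog hst : s ≤ t generalizing s t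
  · exact (this t ht s hs (le_of_not_ge hst)).symm
  have hsub : ∀ p q : ℝ, 0 < p → q ≤ 1 → Icc p q ⊆ Ioc 0 1 := fun _ _ hp hq _ hr ↦
    ⟨hp.trans_le hr.1, hr.2.trans hq⟩
  have hstep : ∀ p ∈ Icc s t, ∀ q ∈ Icc s t, p ≤ q → x q = x p + ∫ r in Ioc p q, x r ∂μ := by
    intro p hp q hq hpq
    have hp0 : 0 < p := hs.1.trans_le hp.1
    refine eq_add_setIntegral_Ioc_of_tendsto hp0 hpq (fun ε hε ↦ ?_)
      (heq p ⟨hp0, hp.2.trans ht.2⟩) (heq q ⟨hp0.trans_le hpq, hq.2.trans ht.2⟩)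
    exact (hx.mono (hsub ε q hε.1 (hq.2.trans ht.2))).integrableOn_Ioc
      (measure_ne_top_of_subset (Ioc_subset_Ioc_right (hq.2.trans ht.2)) (hfin ε hε.1))
  simp only [← measureReal_def]
  refine eq_of_forall_abs_sub_le_mul_sub (f := fun r ↦ x r * exp (μ.real (Ioc r 1)))
    (F := fun r ↦ -μ.real (Ioc r 1)) hst ?_
  simpa only [neg_sub_neg] using exists_forall_abs_mul_exp_measureReal_sub_le ht.2 (hfin s hs.1)
    (hx.mono (hsub s t hs.1 ht.2)) hstep
end

section
/- Let B^H be a fractional Brownian motion with Hurst parameter H ∈ (1/2,1) and let β_t = −∫_{1/t}^∞ u^{−2H} dB^H_u for t > 0, β_0 = 0 (the integral being a Wiener integral with respect to B^H). Then (β_t)_{t≥0} is a fractional Brownian motion with Hurst parameter H. -/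
open MeasureTheory ProbabilityTheory Real Set

/-- A fractional Brownian motion in law (finite-dimensional distributions) with Hurst
parameter `H` on the time set `S`: a centered Gaussian family starting at `0` with
covariance `R_H(s,t) = (1/2)(t^{2H} + s^{2H} - |t-s|^{2H})`. -/
def IsFBMLawOn {Ω : Type} [MeasurableSpace Ω] (P : Measure Ω)
    (H : ℝ) (S : Set ℝ) (B : ℝ → Ω → ℝ) : Prop :=
  (∀ (n : ℕ) (t : Fin n → ℝ), (∀ i, t i ∈ S) → ∀ c : Fin n → ℝ,
      ∃ v : NNReal, Measure.map (fun ω => ∑ i, c i * B (t i) ω) P = gaussianReal 0 v) ∧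
  (∀ ω, B 0 ω = 0) ∧
  (∀ s ∈ S, ∀ t ∈ S,
      ∫ ω, B s ω * B t ω ∂P
        = (1/2) * (|t| ^ (2*H) + |s| ^ (2*H) - |t - s| ^ (2*H)))

/-
Substituting `u = 1/x`, `v = 1/y` in
`E[β_s β_t] = ∫_{1/s}^∞ ∫_{1/t}^∞ u^(-2H) v^(-2H) Φ_H(u - v) dv du`, the Jacobian `(xy)⁻²` and
the homogeneity `Φ_H(1/x - 1/y) = (xy)^(2-2H) Φ_H(x - y)` cancel the weights `u^(-2H) v^(-2H)`
exactly, leaving `∫_0^s ∫_0^t Φ_H(x - y) dy dx = R_H(s, t)`.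
Each `β_t` is a multiple of a single Wiener integral, so the finite-dimensional laws are
Gaussian because those of the Wiener integral are.
-/

section AbsRpow

variable {e : ℝ}

lemma intervalIntegrable_abs_rpow (he : -1 < e) (a b : ℝ) :
    IntervalIntegrable (fun x : ℝ => |x| ^ e) volume a b :=
  intervalIntegrable_of_even (fun x => by rw [abs_neg]) fun c hc =>
    (intervalIntegral.intervalIntegrable_rpow' he).congr fun x hx => by
      rw [uIoc_of_le hc.le] at hx
      simp only [abs_of_pos hx.1]

lemma intervalIntegrable_mul_abs_rpow (he : -1 < e) (a b : ℝ) :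
    IntervalIntegrable (fun x : ℝ => x * |x| ^ e) volume a b :=
  intervalIntegrable_of_odd (fun x => by rw [abs_neg, neg_mul]) fun c hc =>
    (intervalIntegral.intervalIntegrable_rpow' (by linarith : -1 < e + 1)).congr fun x hx => by
      rw [uIoc_of_le hc.le] at hx
      simp only [abs_of_pos hx.1, rpow_add_one hx.1.ne', mul_comm]

lemma intervalIntegrable_sub_mul_abs_sub_rpow (he : -1 < e) (a b c : ℝ) :
    IntervalIntegrable (fun x : ℝ => (x - c) * |x - c| ^ e) volume a b := by
  simpa using (intervalIntegrable_mul_abs_rpow he (a - c) (b - c)).comp_sub_right c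

lemma integral_abs_rpow (he : -1 < e) (b : ℝ) :
    ∫ x in (0:ℝ)..b, |x| ^ e = b * |b| ^ e / (e + 1) := by
  have hpos : ∀ b : ℝ, 0 ≤ b → ∫ x in (0:ℝ)..b, |x| ^ e = b * |b| ^ e / (e + 1) := by
    intro b hb
    rw [intervalIntegral.integral_congr (g := fun x => x ^ e) fun x hx => by
        rw [uIcc_of_le hb] at hx; simp only [abs_of_nonneg hx.1],
      integral_rpow (Or.inl he), zero_rpow (by linarith), abs_of_nonneg hb,
      rpow_add_one' hb (by linarith), sub_zero, mul_comm]
  rcases le_total 0 b with hb | hb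
  · exact hpos b hb
  · have hsymm := intervalIntegral.integral_comp_neg (a := 0) (b := b) fun x : ℝ => |x| ^ e
    simp only [abs_neg, neg_zero] at hsymm
    rw [hsymm, intervalIntegral.integral_symm, hpos (-b) (by linarith), abs_neg]
    ring

lemma integral_mul_abs_rpow (he : -1 < e) (b : ℝ) :
    ∫ x in (0:ℝ)..b, x * |x| ^ e = |b| ^ (e + 2) / (e + 2) := by
  have hpos : ∀ b : ℝ, 0 ≤ b → ∫ x in (0:ℝ)..b, x * |x| ^ e = |b| ^ (e + 2) / (e + 2) := by
    intro b hb
    rw [intervalIntegral.integral_congr (g := fun x => x ^ (e + 1)) fun x hx => by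
        rw [uIcc_of_le hb] at hx
        simp only [abs_of_nonneg hx.1, rpow_add_one' hx.1 (by linarith : e + 1 ≠ 0), mul_comm],
      integral_rpow (Or.inl (by linarith)), zero_rpow (by linarith), abs_of_nonneg hb]
    ring_nf
  rcases le_total 0 b with hb | hb
  · exact hpos b hb
  · have hsymm := intervalIntegral.integral_comp_neg (a := 0) (b := b)
      fun x : ℝ => x * |x| ^ e
    simp only [abs_neg, neg_zero, neg_mul, intervalIntegral.integral_neg] at hsymm
    rw [← neg_neg (∫ x in (0:ℝ)..b, x * |x| ^ e), hsymm, intervalIntegral.integral_symm,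
      hpos (-b) (by linarith), abs_neg, neg_neg]

lemma integral_abs_sub_rpow (he : -1 < e) (a b c : ℝ) :
    ∫ x in a..b, |x - c| ^ e = ((b - c) * |b - c| ^ e - (a - c) * |a - c| ^ e) / (e + 1) := by
  rw [intervalIntegral.integral_comp_sub_right (fun x => |x| ^ e),
    ← intervalIntegral.integral_add_adjacent_intervals (intervalIntegrable_abs_rpow he _ 0)
      (intervalIntegrable_abs_rpow he 0 _),
    intervalIntegral.integral_symm 0, integral_abs_rpow he, integral_abs_rpow he]
  ring

lemma integral_sub_mul_abs_sub_rpow (he : -1 < e) (a b c : ℝ) :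
    ∫ x in a..b, (x - c) * |x - c| ^ e = (|b - c| ^ (e + 2) - |a - c| ^ (e + 2)) / (e + 2) := by
  rw [intervalIntegral.integral_comp_sub_right (fun x => x * |x| ^ e),
    ← intervalIntegral.integral_add_adjacent_intervals (intervalIntegrable_mul_abs_rpow he _ 0)
      (intervalIntegrable_mul_abs_rpow he 0 _),
    intervalIntegral.integral_symm 0, integral_mul_abs_rpow he, integral_mul_abs_rpow he]
  ring

lemma integral_Ioc_abs_sub_rpow (he : -1 < e) {c d : ℝ} (hcd : c ≤ d) (x : ℝ) :
    ∫ y in Ioc c d, |x - y| ^ e = ((x - c) * |x - c| ^ e - (x - d) * |x - d| ^ e) / (e + 1) := by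
  simp_rw [← intervalIntegral.integral_of_le hcd, abs_sub_comm x]
  rw [integral_abs_sub_rpow he c d x, abs_sub_comm c, abs_sub_comm d]
  ring

lemma integrableOn_abs_sub_rpow_Ioc_prod_Ioc (he : -1 < e) (a b : ℝ) {c d : ℝ} (hcd : c ≤ d) :
    IntegrableOn (fun p : ℝ × ℝ => |p.1 - p.2| ^ e) (Ioc a b ×ˢ Ioc c d) := by
  rw [IntegrableOn, Measure.volume_eq_prod, ← Measure.prod_restrict,
    integrable_prod_iff (by fun_prop : Measurable _).aestronglyMeasurable]
  refine ⟨Filter.Eventually.of_forall fun x => ?_, ?_⟩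
  · simp_rw [abs_sub_comm x]
    refine (intervalIntegrable_iff_integrableOn_Ioc_of_le hcd).1 ?_
    simpa using (intervalIntegrable_abs_rpow he (c - x) (d - x)).comp_sub_right x
  · simp_rw [Real.norm_of_nonneg (rpow_nonneg (abs_nonneg _) _), integral_Ioc_abs_sub_rpow he hcd]
    exact (((intervalIntegrable_sub_mul_abs_sub_rpow he a b c).sub
      (intervalIntegrable_sub_mul_abs_sub_rpow he a b d)).div_const (e + 1)).1

lemma integral_abs_sub_rpow_Ioc_prod_Ioc (he : -1 < e) {a b c d : ℝ} (hab : a ≤ b) (hcd : c ≤ d) :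
    ∫ p in Ioc a b ×ˢ Ioc c d, |p.1 - p.2| ^ e
      = (|b - c| ^ (e + 2) + |a - d| ^ (e + 2) - |a - c| ^ (e + 2) - |b - d| ^ (e + 2))
          / ((e + 1) * (e + 2)) := by
  have hint := integrableOn_abs_sub_rpow_Ioc_prod_Ioc he a b hcd
  rw [IntegrableOn, Measure.volume_eq_prod, ← Measure.prod_restrict] at hint
  rw [Measure.volume_eq_prod, ← Measure.prod_restrict, integral_prod _ hint]
  simp_rw [integral_Ioc_abs_sub_rpow he hcd]
  rw [← intervalIntegral.integral_of_le hab, intervalIntegral.integral_div,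
    intervalIntegral.integral_sub (intervalIntegrable_sub_mul_abs_sub_rpow he a b c)
      (intervalIntegrable_sub_mul_abs_sub_rpow he a b d),
    integral_sub_mul_abs_sub_rpow he, integral_sub_mul_abs_sub_rpow he]
  field_simp
  ring

end AbsRpow

section Inversion

variable {E : Type*} [NormedAddCommGroup E] [NormedSpace ℝ E]

open scoped Pointwise in
lemma image_inv_prodMap_Ioi_prod_Ioi :
    Prod.map (·⁻¹) (·⁻¹) '' (Ioi (0:ℝ) ×ˢ Ioi (0:ℝ)) = Ioi 0 ×ˢ Ioi 0 := by
  rw [Set.prodMap_image_prod, Set.image_inv_eq_inv]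
  ext; simp

lemma hasFDerivWithinAt_inv_prodMap {s : Set (ℝ × ℝ)} {p : ℝ × ℝ} (hp₁ : p.1 ≠ 0) (hp₂ : p.2 ≠ 0) :
    HasFDerivWithinAt (Prod.map (·⁻¹) (·⁻¹))
      ((ContinuousLinearMap.smulRight (1 : ℝ →L[ℝ] ℝ) (-(p.1 ^ 2)⁻¹)).prodMap
        (ContinuousLinearMap.smulRight (1 : ℝ →L[ℝ] ℝ) (-(p.2 ^ 2)⁻¹))) s p :=
  ((hasDerivAt_inv hp₁).hasFDerivAt.prodMap p (hasDerivAt_inv hp₂).hasFDerivAt).hasFDerivWithinAt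

lemma abs_det_smulRight_prodMap_smulRight (a b : ℝ) :
    |((ContinuousLinearMap.smulRight (1 : ℝ →L[ℝ] ℝ) a).prodMap
      (ContinuousLinearMap.smulRight (1 : ℝ →L[ℝ] ℝ) b)).det| = |a * b| := by
  rw [ContinuousLinearMap.det, ContinuousLinearMap.coe_prodMap, LinearMap.det_prodMap]
  simp

lemma abs_inv_sq_mul_inv_sq (x y : ℝ) : |-(x ^ 2)⁻¹ * -(y ^ 2)⁻¹| = ((x * y) ^ 2)⁻¹ := by
  rw [neg_mul_neg, ← mul_inv, ← mul_pow, abs_of_nonneg (by positivity)]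

lemma integrableOn_Ioi_prod_Ioi_comp_inv_iff (g : ℝ × ℝ → E) :
    IntegrableOn g (Ioi 0 ×ˢ Ioi 0) ↔
      IntegrableOn (fun p : ℝ × ℝ => ((p.1 * p.2) ^ 2)⁻¹ • g (p.1⁻¹, p.2⁻¹)) (Ioi 0 ×ˢ Ioi 0) := by
  conv_lhs => rw [← image_inv_prodMap_Ioi_prod_Ioi]
  rw [integrableOn_image_iff_integrableOn_abs_det_fderiv_smul volume
      (measurableSet_Ioi.prod measurableSet_Ioi)
      (fun p hp => hasFDerivWithinAt_inv_prodMap hp.1.ne' hp.2.ne')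
      (inv_injective.prodMap inv_injective).injOn]
  simp only [abs_det_smulRight_prodMap_smulRight, abs_inv_sq_mul_inv_sq]
  rfl

lemma integral_Ioi_prod_Ioi_comp_inv (g : ℝ × ℝ → E) :
    ∫ p in Ioi 0 ×ˢ Ioi 0, g p =
      ∫ p in Ioi 0 ×ˢ Ioi 0, ((p.1 * p.2) ^ 2)⁻¹ • g (p.1⁻¹, p.2⁻¹) := by
  conv_lhs => rw [← image_inv_prodMap_Ioi_prod_Ioi]
  rw [integral_image_eq_integral_abs_det_fderiv_smul volume
      (measurableSet_Ioi.prod measurableSet_Ioi)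
      (fun p hp => hasFDerivWithinAt_inv_prodMap hp.1.ne' hp.2.ne')
      (inv_injective.prodMap inv_injective).injOn]
  simp only [abs_det_smulRight_prodMap_smulRight, abs_inv_sq_mul_inv_sq]
  rfl

end Inversion

noncomputable def fbmKernel (H x : ℝ) : ℝ := H * (2 * H - 1) * |x| ^ (2 * H - 2)

noncomputable def timeInversionIntegrand (H t u : ℝ) : ℝ := if 1 / t ≤ u then u ^ (-(2 * H)) else 0

section TimeInversion

variable {H : ℝ}

lemma fbmKernel_inv_sub_inv {x y : ℝ} (hx : 0 < x) (hy : 0 < y) :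
    fbmKernel H (x⁻¹ - y⁻¹) = (x * y) ^ (2 - 2 * H) * fbmKernel H (x - y) := by
  have hxy : 0 < x * y := mul_pos hx hy
  have : |x⁻¹ - y⁻¹| = |x - y| / (x * y) := by
    rw [inv_sub_inv hx.ne' hy.ne', abs_div, abs_sub_comm, abs_of_pos hxy]
  rw [fbmKernel, fbmKernel, this, div_rpow (abs_nonneg _) hxy.le, div_eq_mul_inv,
    ← rpow_neg hxy.le, neg_sub]
  ring

lemma timeInversionIntegrand_inv {t x : ℝ} (ht : 0 < t) (hx : 0 < x) :
    timeInversionIntegrand H t x⁻¹ = if x ≤ t then x ^ (2 * H) else 0 := by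
  simp only [timeInversionIntegrand, one_div, inv_le_inv₀ ht hx, inv_rpow hx.le, ← rpow_neg hx.le,
    neg_neg]

lemma timeInversionIntegrand_of_nonpos {t u : ℝ} (ht : 0 < t) (hu : u ≤ 0) :
    timeInversionIntegrand H t u = 0 :=
  if_neg (by have := one_div_pos.2 ht; linarith)

lemma inv_sq_mul_timeInversion_covariance_inv {s t x y : ℝ} (hs : 0 < s) (ht : 0 < t)
    (hx : 0 < x) (hy : 0 < y) :
    ((x * y) ^ 2)⁻¹ * (timeInversionIntegrand H s x⁻¹ * timeInversionIntegrand H t y⁻¹ *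
      fbmKernel H (x⁻¹ - y⁻¹))
      = (Ioc 0 s ×ˢ Ioc 0 t).indicator (fun p => fbmKernel H (p.1 - p.2)) (x, y) := by
  have hpow : x ^ (2 * H) * y ^ (2 * H) * (x * y) ^ (2 - 2 * H) = (x * y) ^ 2 := by
    rw [← mul_rpow hx.le hy.le, ← rpow_add (mul_pos hx hy), add_sub_cancel, rpow_two]
  rw [timeInversionIntegrand_inv hs hx, timeInversionIntegrand_inv ht hy,
    fbmKernel_inv_sub_inv hx hy, indicator_apply]
  by_cases hxs : x ≤ s
  · by_cases hyt : y ≤ t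
    · simp only [hxs, hyt, mk_mem_prod, mem_Ioc, hx, hy, and_self, if_true]
      rw [← mul_assoc, ← mul_assoc, mul_assoc ((x * y) ^ 2)⁻¹, hpow,
        inv_mul_cancel₀ (by positivity), one_mul]
    · simp [hyt]
  · simp [hxs]

lemma integrableOn_fbmKernel_Ioc_prod_Ioc (hH : 1 / 2 < H) (a b : ℝ) {c d : ℝ} (hcd : c ≤ d) :
    IntegrableOn (fun p : ℝ × ℝ => fbmKernel H (p.1 - p.2)) (Ioc a b ×ˢ Ioc c d) :=
  (integrableOn_abs_sub_rpow_Ioc_prod_Ioc (by linarith) a b hcd).const_mul _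

lemma integral_fbmKernel_Ioc_prod_Ioc (hH : 1 / 2 < H) {s t : ℝ} (hs : 0 ≤ s) (ht : 0 ≤ t) :
    ∫ p in Ioc 0 s ×ˢ Ioc 0 t, fbmKernel H (p.1 - p.2)
      = (s ^ (2 * H) + t ^ (2 * H) - |s - t| ^ (2 * H)) / 2 := by
  simp only [fbmKernel]
  rw [integral_const_mul, integral_abs_sub_rpow_Ioc_prod_Ioc (by linarith) hs ht,
    show 2 * H - 2 + 2 = 2 * H by ring, show 2 * H - 2 + 1 = 2 * H - 1 by ring,
    sub_zero, zero_sub, sub_self, abs_neg, abs_of_nonneg hs, abs_of_nonneg ht, abs_zero,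
    zero_rpow (by linarith), sub_zero, mul_div_assoc',
    div_eq_div_iff (mul_ne_zero (by linarith) (by linarith)) two_ne_zero]
  ring

lemma support_timeInversion_covariance_subset {s t : ℝ} (hs : 0 < s) (ht : 0 < t) :
    Function.support (fun p : ℝ × ℝ => timeInversionIntegrand H s p.1 *
      timeInversionIntegrand H t p.2 * fbmKernel H (p.1 - p.2)) ⊆ Ioi 0 ×ˢ Ioi 0 := by
  intro p hp
  by_contra hT
  rcases not_and_or.1 hT with hx | hy
  · exact hp (by simp [timeInversionIntegrand_of_nonpos hs (not_lt.1 hx)])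
  · exact hp (by simp [timeInversionIntegrand_of_nonpos ht (not_lt.1 hy)])

lemma eqOn_timeInversion_covariance_comp_inv {s t : ℝ} (hs : 0 < s) (ht : 0 < t) :
    EqOn (fun p : ℝ × ℝ => ((p.1 * p.2) ^ 2)⁻¹ • (timeInversionIntegrand H s p.1⁻¹ *
        timeInversionIntegrand H t p.2⁻¹ * fbmKernel H (p.1⁻¹ - p.2⁻¹)))
      ((Ioc 0 s ×ˢ Ioc 0 t).indicator fun p => fbmKernel H (p.1 - p.2)) (Ioi 0 ×ˢ Ioi 0) :=
  fun _ hp => inv_sq_mul_timeInversion_covariance_inv hs ht hp.1 hp.2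

lemma integrable_timeInversion_covariance (hH : 1 / 2 < H) {s t : ℝ} (hs : 0 < s) (ht : 0 < t) :
    Integrable fun p : ℝ × ℝ => timeInversionIntegrand H s p.1 *
      timeInversionIntegrand H t p.2 * fbmKernel H (p.1 - p.2) := by
  rw [← integrableOn_iff_integrable_of_support_subset
      (support_timeInversion_covariance_subset hs ht),
    integrableOn_Ioi_prod_Ioi_comp_inv_iff,
    integrableOn_congr_fun (eqOn_timeInversion_covariance_comp_inv hs ht)
      (measurableSet_Ioi.prod measurableSet_Ioi)]
  exact ((integrable_indicator_iff (measurableSet_Ioc.prod measurableSet_Ioc)).2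
    (integrableOn_fbmKernel_Ioc_prod_Ioc hH 0 s ht.le)).integrableOn

lemma integral_timeInversion_covariance (hH : 1 / 2 < H) {s t : ℝ} (hs : 0 < s) (ht : 0 < t) :
    ∫ p : ℝ × ℝ, timeInversionIntegrand H s p.1 * timeInversionIntegrand H t p.2 *
      fbmKernel H (p.1 - p.2) = (s ^ (2 * H) + t ^ (2 * H) - |s - t| ^ (2 * H)) / 2 := by
  rw [← setIntegral_eq_integral_of_forall_compl_eq_zero fun p hp =>
      Function.notMem_support.1 fun h => hp (support_timeInversion_covariance_subset hs ht h),
    integral_Ioi_prod_Ioi_comp_inv,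
    setIntegral_congr_fun (measurableSet_Ioi.prod measurableSet_Ioi)
      (eqOn_timeInversion_covariance_comp_inv hs ht),
    setIntegral_indicator (measurableSet_Ioc.prod measurableSet_Ioc),
    inter_eq_right.2 (prod_mono Ioc_subset_Ioi_self Ioc_subset_Ioi_self)]
  exact integral_fbmKernel_Ioc_prod_Ioc hH hs.le ht.le

end TimeInversion

lemma exists_map_sum_eq_gaussianReal {Ω : Type} [MeasurableSpace Ω] {P : Measure Ω}
    {W : (ℝ → ℝ) → Ω → ℝ}
    (hGauss : ∀ (n : ℕ) (f : Fin n → (ℝ → ℝ)) (c : Fin n → ℝ),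
      ∃ v : NNReal, Measure.map (fun ω => ∑ i, c i * W (f i) ω) P = gaussianReal 0 v)
    {n : ℕ} (X : Fin n → Ω → ℝ) (hX : ∀ i, ∃ a f, ∀ ω, X i ω = a * W f ω) (c : Fin n → ℝ) :
    ∃ v : NNReal, Measure.map (fun ω => ∑ i, c i * X i ω) P = gaussianReal 0 v := by
  choose a f hXaf using hX
  obtain ⟨v, hv⟩ := hGauss n f fun i => c i * a i
  refine ⟨v, ?_⟩
  simpa only [hXaf, mul_assoc] using hv

theorem time_inversion_fbm_general
    {Ω : Type} [MeasurableSpace Ω] (P : Measure Ω)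
    (H : ℝ) (hH : H ∈ Set.Ioo (1/2 : ℝ) 1)
    (W : (ℝ → ℝ) → Ω → ℝ)
    (hGauss : ∀ (n : ℕ) (f : Fin n → (ℝ → ℝ)) (c : Fin n → ℝ),
      ∃ v : NNReal, Measure.map (fun ω => ∑ i, c i * W (f i) ω) P = gaussianReal 0 v)
    (hCov : ∀ f g : ℝ → ℝ,
      Integrable (fun p : ℝ × ℝ =>
        f p.1 * g p.2 * (H * (2*H - 1) * |p.1 - p.2| ^ (2*H - 2))) →
      ∫ ω, W f ω * W g ω ∂P
        = ∫ p : ℝ × ℝ,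
            f p.1 * g p.2 * (H * (2*H - 1) * |p.1 - p.2| ^ (2*H - 2)))
    (β : ℝ → Ω → ℝ) (hβ0 : ∀ ω, β 0 ω = 0)
    (hβ : ∀ t : ℝ, 0 < t → ∀ ω,
      β t ω = - W (fun u => if 1/t ≤ u then u ^ (-(2*H)) else 0) ω) :
    IsFBMLawOn P H (Ici 0) β := by
  have hβW : ∀ t, 0 ≤ t → ∃ a f, ∀ ω, β t ω = a * W f ω := by
    intro t ht
    rcases ht.eq_or_lt with rfl | ht
    · exact ⟨0, 0, fun ω => by rw [hβ0, zero_mul]⟩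
    · exact ⟨-1, timeInversionIntegrand H t, fun ω => by rw [hβ t ht ω, neg_one_mul]; rfl⟩
  refine ⟨fun n t ht c => exists_map_sum_eq_gaussianReal hGauss _ (fun i => hβW _ (ht i)) c,
    hβ0, fun s hs t ht => ?_⟩
  have h2H : (2 * H) ≠ 0 := by linarith [hH.1]
  rcases (mem_Ici.1 hs).eq_or_lt with rfl | hs
  · simp [hβ0, zero_rpow h2H]
  rcases (mem_Ici.1 ht).eq_or_lt with rfl | ht
  · simp [hβ0, zero_rpow h2H]
  have hcov := hCov (timeInversionIntegrand H s) (timeInversionIntegrand H t)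
    (integrable_timeInversion_covariance hH.1 hs ht)
  calc ∫ ω, β s ω * β t ω ∂P
      = ∫ ω, W (timeInversionIntegrand H s) ω * W (timeInversionIntegrand H t) ω ∂P := by
        simp_rw [hβ s hs, hβ t ht, neg_mul_neg]; rfl
    _ = (s ^ (2 * H) + t ^ (2 * H) - |s - t| ^ (2 * H)) / 2 :=
        hcov.trans (integral_timeInversion_covariance hH.1 hs ht)
    _ = 1 / 2 * (|t| ^ (2 * H) + |s| ^ (2 * H) - |t - s| ^ (2 * H)) := by
        rw [abs_of_pos hs, abs_of_pos ht, abs_sub_comm]; ring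

/-- Time inversion: if `W` denotes the Wiener integral with respect to a fractional
Brownian motion with Hurst parameter `H ∈ (1/2,1)` (a jointly Gaussian centered family
with covariance `E[W f · W g] = ∫∫ f(u) g(v) H(2H-1)|u-v|^{2H-2} du dv`), then
`β_t = -∫_{1/t}^∞ u^{-2H} dB^H_u` (with `β_0 = 0`) is a fractional Brownian motion
with Hurst parameter `H`. -/
theorem time_inversion_fbm
    {Ω : Type} [MeasurableSpace Ω] (P : Measure Ω) [IsProbabilityMeasure P]
    (H : ℝ) (hH : H ∈ Set.Ioo (1/2 : ℝ) 1)
    (W : (ℝ → ℝ) → Ω → ℝ)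
    (hGauss : ∀ (n : ℕ) (f : Fin n → (ℝ → ℝ)) (c : Fin n → ℝ),
      ∃ v : NNReal, Measure.map (fun ω => ∑ i, c i * W (f i) ω) P = gaussianReal 0 v)
    (hCov : ∀ f g : ℝ → ℝ,
      Integrable (fun p : ℝ × ℝ =>
        f p.1 * g p.2 * (H * (2*H - 1) * |p.1 - p.2| ^ (2*H - 2))) →
      ∫ ω, W f ω * W g ω ∂P
        = ∫ p : ℝ × ℝ,
            f p.1 * g p.2 * (H * (2*H - 1) * |p.1 - p.2| ^ (2*H - 2)))
    (β : ℝ → Ω → ℝ) (hβ0 : ∀ ω, β 0 ω = 0)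
    (hβ : ∀ t : ℝ, 0 < t → ∀ ω,
      β t ω = - W (fun u => if 1/t ≤ u then u ^ (-(2*H)) else 0) ω) :
    IsFBMLawOn P H (Ici 0) β :=
  time_inversion_fbm_general P H hH W hGauss hCov β hβ0 hβ
end
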